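/- Let {b_j} satisfy b_0 = 1 and b_j ≥ 2 for j ≥ 1, and let A, B be as in the mixed-radix construction. For x_k = a_{2k} − 1 one has A(x_k) = b_1 b_3 b_5 ⋯ b_{2k−1}, B(x_k) = b_2 b_4 b_6 ⋯ b_{2k}, and consequently A(x_k)B(x_k) − x_k = 1 for every k ≥ 1. -/

import Mathlib

open Filter

/-- The counting function of a set `A` of non-negative integers:
`countBelow A x = #{a ∈ A : a ≤ x}`. -/
noncomputable def countBelow (A : Set ℕ) (x : ℕ) : ℕ := (A ∩ Set.Iic x).ncard

/-- `aSeq b j = Π_{i=0}^{j} b_i`. -/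
def aSeq (b : ℕ → ℕ) (j : ℕ) : ℕ := ∏ i ∈ Finset.range (j + 1), b i

/-- The set of non-negative integers using only even-indexed digits in the
mixed-radix system associated to `b`. -/
def mixA (b : ℕ → ℕ) : Set ℕ :=
  { m | ∃ N : ℕ, ∃ ε : ℕ → ℕ, (∀ j, ε j ≤ b (2 * j + 1) - 1) ∧
      m = ∑ j ∈ Finset.range N, ε j * aSeq b (2 * j) }

/-- The set of non-negative integers using only odd-indexed digits in the
mixed-radix system associated to `b`. -/
def mixB (b : ℕ → ℕ) : Set ℕ :=
  { m | ∃ N : ℕ, ∃ ε : ℕ → ℕ, (∀ j, ε j ≤ b (2 * j + 2) - 1) ∧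
      m = ∑ j ∈ Finset.range N, ε j * aSeq b (2 * j + 1) }

/-!
Both `A` and `B` are sets of mixed-radix digit sums `∑ ε_j p_j`, `0 ≤ ε_j < d_j`, whose place
values grow at least as fast as the radix requires: `p_j d_j ≤ p_{j+1}`. Under that condition
the sums over the places `j ≤ k` are pairwise distinct and lie below `p_k d_k`, while any sum
using a later place is at least `p_{k+1}`. So for every `M` with `p_k d_k ≤ M ≤ p_{k+1}`
exactly `∏_{j ≤ k} d_j` elements lie below `M`. The bound `M = a_{2k}` fits both `A` and `B`,
and the two products multiply to `a_{2k}`.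
-/

open Finset

/-- `mixA b` and `mixB b` are, definitionally, `digitSums (a_{2j}) (b_{2j+1})` and
`digitSums (a_{2j+1}) (b_{2j+2})`. -/
def digitSums (p d : ℕ → ℕ) : Set ℕ :=
  { m | ∃ N : ℕ, ∃ ε : ℕ → ℕ, (∀ j, ε j ≤ d j - 1) ∧ m = ∑ j ∈ range N, ε j * p j }

def digitSumsUpTo (p d : ℕ → ℕ) : ℕ → Finset ℕ
  | 0 => {0}
  | k + 1 => (digitSumsUpTo p d k ×ˢ range (d k)).image fun x => x.1 + x.2 * p k

namespace digitSumsUpTo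

variable {p d : ℕ → ℕ} {k m : ℕ}

theorem mem_succ :
    m ∈ digitSumsUpTo p d (k + 1) ↔ ∃ r ∈ digitSumsUpTo p d k, ∃ e < d k, r + e * p k = m := by
  simp [digitSumsUpTo, and_assoc]

theorem sum_mem (hd : ∀ j, 0 < d j) {ε : ℕ → ℕ} (hε : ∀ j, ε j ≤ d j - 1) (k : ℕ) :
    ∑ j ∈ range k, ε j * p j ∈ digitSumsUpTo p d k := by
  induction k with
  | zero => simp [digitSumsUpTo]
  | succ k ih =>
    rw [sum_range_succ, mem_succ]
    exact ⟨_, ih, ε k, by have := hε k; have := hd k; omega, rfl⟩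

theorem exists_digits (hm : m ∈ digitSumsUpTo p d k) :
    ∃ ε : ℕ → ℕ, (∀ j, ε j ≤ d j - 1) ∧ m = ∑ j ∈ range k, ε j * p j := by
  induction k generalizing m with
  | zero => exact ⟨0, fun _ => Nat.zero_le _, by simpa [digitSumsUpTo] using hm⟩
  | succ k ih =>
    obtain ⟨r, hr, e, he, rfl⟩ := mem_succ.1 hm
    obtain ⟨ε, hε, rfl⟩ := ih hr
    refine ⟨Function.update ε k e, fun j => ?_, ?_⟩
    · rcases eq_or_ne j k with rfl | hj
      · simp only [Function.update_self]; omega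
      · simpa [Function.update_of_ne hj] using hε j
    · rw [sum_range_succ, Function.update_self]
      congr 1
      exact sum_congr rfl fun j hj =>
        by rw [Function.update_of_ne (mem_range.1 hj).ne]

theorem mono (hd : ∀ j, 0 < d j) : Monotone (digitSumsUpTo p d) :=
  monotone_nat_of_le_succ fun k r hr => mem_succ.2 ⟨r, hr, 0, hd k, by simp⟩

theorem lt_of_mem (hp0 : 0 < p 0) (hp : ∀ j, p j * d j ≤ p (j + 1))
    (hm : m ∈ digitSumsUpTo p d k) : m < p k := by
  induction k generalizing m with
  | zero => simp_all [digitSumsUpTo]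
  | succ k ih =>
    obtain ⟨r, hr, e, he, rfl⟩ := mem_succ.1 hm
    calc r + e * p k < (e + 1) * p k := by have := ih hr; linarith
      _ ≤ p k * d k := by rw [mul_comm]; exact Nat.mul_le_mul_left _ he
      _ ≤ p (k + 1) := hp k

theorem lt_mul_of_mem_succ (hp0 : 0 < p 0) (hp : ∀ j, p j * d j ≤ p (j + 1))
    (hm : m ∈ digitSumsUpTo p d (k + 1)) : m < p k * d k := by
  obtain ⟨r, hr, e, he, rfl⟩ := mem_succ.1 hm
  calc r + e * p k < (e + 1) * p k := by have := lt_of_mem hp0 hp hr; linarith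
    _ ≤ p k * d k := by rw [mul_comm]; exact Nat.mul_le_mul_left _ he

theorem card_eq_prod (hp0 : 0 < p 0) (hp : ∀ j, p j * d j ≤ p (j + 1)) (k : ℕ) :
    #(digitSumsUpTo p d k) = ∏ j ∈ range k, d j := by
  induction k with
  | zero => rfl
  | succ k ih =>
    have hinj : Set.InjOn (fun x : ℕ × ℕ => x.1 + x.2 * p k)
        ↑(digitSumsUpTo p d k ×ˢ range (d k)) := by
      rintro ⟨r, e⟩ hre ⟨r', e'⟩ hre' h
      have hr := lt_of_mem hp0 hp (mem_product.1 hre).1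
      have hr' := lt_of_mem hp0 hp (mem_product.1 hre').1
      have hpk : 0 < p k := hr.pos
      simp only at h
      have hmod := congrArg (· % p k) h
      have hdiv := congrArg (· / p k) h
      simp only [Nat.add_mul_mod_self_right, Nat.add_mul_div_right _ _ hpk, Nat.mod_eq_of_lt hr,
        Nat.mod_eq_of_lt hr', Nat.div_eq_of_lt hr, Nat.div_eq_of_lt hr', zero_add] at hmod hdiv
      rw [hmod, hdiv]
    rw [digitSumsUpTo, card_image_of_injOn hinj, card_product, card_range, ih, prod_range_succ]

theorem mem_of_lt (hp : ∀ j, p j * d j ≤ p (j + 1)) (hd : ∀ j, 0 < d j) {N : ℕ}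
    (hm : m ∈ digitSumsUpTo p d N) (hmk : m < p k) :
    m ∈ digitSumsUpTo p d k := by
  have hp_mono : Monotone p :=
    monotone_nat_of_le_succ fun j => (Nat.le_mul_of_pos_right _ (hd j)).trans (hp j)
  induction N generalizing m with
  | zero => exact mono hd (Nat.zero_le k) hm
  | succ N ih =>
    rcases le_or_gt k N with hkN | hNk
    · obtain ⟨r, hr, e, -, rfl⟩ := mem_succ.1 hm
      have he : e = 0 := by
        by_contra he
        have := Nat.le_mul_of_pos_left (p N) (Nat.pos_of_ne_zero he)
        have := hp_mono hkN
        omega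
      subst he
      simpa using ih hr (by simpa using hmk)
    · exact mono hd hNk hm

end digitSumsUpTo

theorem mem_digitSums_iff {p d : ℕ → ℕ} (hd : ∀ j, 0 < d j) {m : ℕ} :
    m ∈ digitSums p d ↔ ∃ k, m ∈ digitSumsUpTo p d k := by
  constructor
  · rintro ⟨N, ε, hε, rfl⟩
    exact ⟨N, digitSumsUpTo.sum_mem hd hε N⟩
  · rintro ⟨k, hm⟩
    obtain ⟨ε, hε, rfl⟩ := digitSumsUpTo.exists_digits hm
    exact ⟨k, ε, hε, rfl⟩

theorem countBelow_digitSums_pred {p d : ℕ → ℕ} (hp0 : 0 < p 0)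
    (hp : ∀ j, p j * d j ≤ p (j + 1)) (hd : ∀ j, 0 < d j) {k M : ℕ}
    (hkM : p k * d k ≤ M) (hMk : M ≤ p (k + 1)) :
    countBelow (digitSums p d) (M - 1) = ∏ j ∈ range (k + 1), d j := by
  have hM : 0 < M := (digitSumsUpTo.lt_mul_of_mem_succ hp0 hp
    (digitSumsUpTo.mono hd (Nat.zero_le _) (mem_singleton_self 0))).trans_le hkM
  have hset : digitSums p d ∩ Set.Iic (M - 1) = digitSumsUpTo p d (k + 1) := by
    ext m
    simp only [Set.mem_inter_iff, mem_digitSums_iff hd, Set.mem_Iic, mem_coe]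
    constructor
    · rintro ⟨⟨N, hm⟩, hmM⟩
      exact digitSumsUpTo.mem_of_lt hp hd hm (by omega)
    · intro hm
      have := digitSumsUpTo.lt_mul_of_mem_succ hp0 hp hm
      exact ⟨⟨_, hm⟩, by omega⟩
  rw [countBelow, hset, Set.ncard_coe_finset, digitSumsUpTo.card_eq_prod hp0 hp]

section aSeq

variable {b : ℕ → ℕ}

theorem aSeq_succ (b : ℕ → ℕ) (j : ℕ) : aSeq b (j + 1) = aSeq b j * b (j + 1) :=
  prod_range_succ b (j + 1)

theorem aSeq_pos (hb : ∀ j, 0 < b j) (j : ℕ) : 0 < aSeq b j :=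
  prod_pos fun i _ => hb i

theorem aSeq_le_succ (hb : ∀ j, 0 < b j) (j : ℕ) : aSeq b j ≤ aSeq b (j + 1) :=
  (aSeq_succ b j).symm ▸ Nat.le_mul_of_pos_right _ (hb _)

theorem prod_odd_mul_prod_even (hb0 : b 0 = 1) (k : ℕ) :
    (∏ i ∈ range k, b (2 * i + 1)) * ∏ i ∈ range k, b (2 * i + 2) = aSeq b (2 * k) := by
  induction k with
  | zero => simp [aSeq, hb0]
  | succ k ih =>
    rw [prod_range_succ, prod_range_succ, Nat.mul_succ, aSeq_succ, aSeq_succ, ← ih]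
    ring

end aSeq

theorem stmt11 (b : ℕ → ℕ) (hb0 : b 0 = 1) (hb : ∀ j, 1 ≤ j → 2 ≤ b j)
    (k : ℕ) (hk : 1 ≤ k) :
    countBelow (mixA b) (aSeq b (2 * k) - 1) = ∏ i ∈ Finset.range k, b (2 * i + 1) ∧
    countBelow (mixB b) (aSeq b (2 * k) - 1) = ∏ i ∈ Finset.range k, b (2 * i + 2) ∧
    countBelow (mixA b) (aSeq b (2 * k) - 1) * countBelow (mixB b) (aSeq b (2 * k) - 1)
      = (aSeq b (2 * k) - 1) + 1 := by
  have hpos : ∀ j, 0 < b j := fun j => by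
    rcases j with _ | j
    · omega
    · have := hb (j + 1) (by omega); omega
  obtain ⟨n, rfl⟩ := Nat.exists_eq_add_of_le' hk
  have hA : countBelow (mixA b) (aSeq b (2 * (n + 1)) - 1) = ∏ i ∈ range (n + 1), b (2 * i + 1) :=
    countBelow_digitSums_pred (p := fun j => aSeq b (2 * j)) (d := fun j => b (2 * j + 1))
      (aSeq_pos hpos 0) (fun _ => (aSeq_succ b _).symm.trans_le (aSeq_le_succ hpos _))
      (fun _ => hpos _) ((aSeq_succ b _).symm.trans_le (aSeq_le_succ hpos _)) le_rfl
  have hB : countBelow (mixB b) (aSeq b (2 * (n + 1)) - 1) = ∏ i ∈ range (n + 1), b (2 * i + 2) :=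
    countBelow_digitSums_pred (p := fun j => aSeq b (2 * j + 1)) (d := fun j => b (2 * j + 2))
      (aSeq_pos hpos 1) (fun _ => (aSeq_succ b _).symm.trans_le (aSeq_le_succ hpos _))
      (fun _ => hpos _) (aSeq_succ b _).symm.le (aSeq_le_succ hpos _)
  refine ⟨hA, hB, ?_⟩
  rw [hA, hB, prod_odd_mul_prod_even hb0]
  have := aSeq_pos hpos (2 * (n + 1))
  omega
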